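/- Let n = 2m > 3 be even and let a, b be natural numbers with 1 ≤ a < b ≤ n-1, both even, and gcd(a+b, n) = 2. Then there exists an odd index i with 1 ≤ i ≤ n-1 such that n divides ((i+1)/2)·a + ((i-1)/2)·b. -/

import Mathlib

/-! For the odd index `i = 2k + 1` we have `s_i = (k + 1) a + k b = a + k (a + b)`, so we need
to solve the linear congruence `a + k (a + b) ≡ 0 (mod 2m)`. Since `gcd (a + b, 2m) = 2` divides
the even number `a`, it has a solution `k` below `2m / 2 = m`, i.e. with `i ≤ 2m - 1`. -/

namespace Nat

theorem exists_lt_dvd_add_mul_of_coprime {n d : ℕ} [NeZero n] (a : ℕ) (hd : d.Coprime n) :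
    ∃ k < n, n ∣ a + k * d := by
  let u := ZMod.unitOfCoprime d hd
  refine ⟨((-a : ZMod n) * ↑u⁻¹).val, ZMod.val_lt _, ?_⟩
  rw [← ZMod.natCast_eq_zero_iff]
  push_cast
  rw [ZMod.natCast_val, ZMod.cast_id, ← ZMod.coe_unitOfCoprime d hd, mul_assoc,
    Units.inv_mul, mul_one, add_neg_cancel]

theorem exists_lt_div_gcd_dvd_add_mul {n d a : ℕ} (hn : n ≠ 0) (ha : gcd d n ∣ a) :
    ∃ k < n / gcd d n, n ∣ a + k * d := by
  have hg : 0 < gcd d n := gcd_pos_of_pos_right d (pos_of_ne_zero hn)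
  have : NeZero (n / gcd d n) :=
    ⟨(Nat.div_pos (le_of_dvd (pos_of_ne_zero hn) (gcd_dvd_right d n)) hg).ne'⟩
  obtain ⟨k, hk, hdvd⟩ :=
    exists_lt_dvd_add_mul_of_coprime (a / gcd d n) (coprime_div_gcd_div_gcd hg)
  refine ⟨k, hk, ?_⟩
  have hsplit : a + k * d = gcd d n * (a / gcd d n + k * (d / gcd d n)) := by
    rw [mul_add, Nat.mul_div_cancel' ha, mul_left_comm, Nat.mul_div_cancel' (gcd_dvd_left d n)]
  rw [hsplit]
  simpa only [Nat.mul_div_cancel' (gcd_dvd_right d n)] using mul_dvd_mul_left (gcd d n) hdvd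

end Nat

theorem even_sides_early_closure_general
    (m a b : ℕ) (hm : 2 ≤ m) (ha : Even a)
    (hgcd : Nat.gcd (a + b) (2 * m) = 2) :
    ∃ i : ℕ, Odd i ∧ 1 ≤ i ∧ i ≤ 2 * m - 1 ∧
      2 * m ∣ ((i + 1) / 2) * a + ((i - 1) / 2) * b := by
  obtain ⟨k, hk, hdvd⟩ := Nat.exists_lt_div_gcd_dvd_add_mul (n := 2 * m) (by omega)
    (hgcd ▸ even_iff_two_dvd.mp ha)
  rw [hgcd, Nat.mul_div_cancel_left m two_pos] at hk
  refine ⟨2 * k + 1, odd_two_mul_add_one k, by omega, by omega, ?_⟩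
  have hs : (2 * k + 1 + 1) / 2 * a + (2 * k + 1 - 1) / 2 * b = a + k * (a + b) := by
    rw [show (2 * k + 1 + 1) / 2 = k + 1 by omega, show (2 * k + 1 - 1) / 2 = k by omega]
    ring
  rwa [hs]

theorem even_sides_early_closure
    (m a b : ℕ) (hm : 2 ≤ m) (ha : Even a) (hb : Even b)
    (ha1 : 1 ≤ a) (hab : a < b) (hbn : b ≤ 2 * m - 1)
    (hgcd : Nat.gcd (a + b) (2 * m) = 2) :
    ∃ i : ℕ, Odd i ∧ 1 ≤ i ∧ i ≤ 2 * m - 1 ∧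
      2 * m ∣ ((i + 1) / 2) * a + ((i - 1) / 2) * b :=
  even_sides_early_closure_general m a b hm ha hgcd
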